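/- Let D > 0, R₀ > 0, a > 0, and let û be the unique function in C²([R₀, ∞)) with û(R₀) = a, û > 0, û''(r) + (2/r) û'(r) = D û(r)^{3/2} on (R₀, ∞), and û(r) → 0 as r → ∞. Then there is a constant C > 0 such that û(r) ≤ C r^{−4} for all r ≥ R₀; in particular ∫_{R₀}^∞ r² û(r)^{3/2} dr < ∞, i.e. the corresponding radial density û(|x|)^{3/2} is integrable on ℝ³ outside the ball of radius R₀. -/

import Mathlib

/-!
The function `(144/D²) r⁻⁴` solves the equation, and `w = K r⁻⁴` is a supersolution,
`w'' + (2/r) w' = 12 K r⁻⁶ ≤ D w^{3/2}`, for every `K ≥ 144/D²`. Taking moreover `K ≥ a R₀⁴`,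
so that `u ≤ w` at `R₀`, a maximum principle gives `u ≤ w` everywhere: since `u - w → 0`,
a positive value of `u - w` would produce an interior maximum, where `u' = w'` and `u'' ≤ w''`,
whereas the equation and the monotonicity of `t ↦ D t^{3/2}` force `u'' > w''` there.
Integrability then follows from `r² u^{3/2} ≤ K^{3/2} r⁻⁴`.
-/

open Set Filter MeasureTheory

noncomputable section

/-- `u` is a positive solution of the atmospheric equation
`u'' + (2/r)u' = D u^{3/2}` on `[R₀,∞)` with `u(R₀) = a` and `u(r) → 0` as `r → ∞`. -/
def IsAtmosSol (D R₀ a : ℝ) (u : ℝ → ℝ) : Prop :=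
  ContDiffOn ℝ 2 u (Ici R₀) ∧ u R₀ = a ∧ (∀ r : ℝ, R₀ ≤ r → 0 < u r) ∧
  (∀ r : ℝ, R₀ < r →
    deriv (deriv u) r + 2 / r * deriv u r = D * u r ^ ((3:ℝ)/2)) ∧
  Tendsto u atTop (nhds 0)

open Topology

lemma deriv_deriv_nonpos_of_isLocalMax {f : ℝ → ℝ} {x : ℝ} (hmax : IsLocalMax f x)
    (hc : ContinuousAt f x) : deriv (deriv f) x ≤ 0 := by
  -- By the second derivative test `x` would also be a local minimum, so `f` locally constant.
  by_contra! hpos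
  have hmin := isLocalMin_of_deriv_deriv_pos hpos hmax.deriv_eq_zero hc
  have hconst : f =ᶠ[𝓝 x] fun _ => f x :=
    (hmin.and hmax).mono fun y hy => le_antisymm hy.2 hy.1
  have hderiv : deriv f =ᶠ[𝓝 x] fun _ => 0 :=
    hconst.eventuallyEq_nhds.mono fun y hy => by rw [hy.deriv_eq, deriv_const]
  simp [hderiv.deriv_eq] at hpos

lemma exists_isMaxOn_Ici_of_tendsto {f : ℝ → ℝ} {R₀ r₁ : ℝ} (hf : ContinuousOn f (Ici R₀))
    (hr₁ : R₀ ≤ r₁) (hlim : Tendsto f atTop (𝓝 0)) (hpos : 0 < f r₁) :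
    ∃ x ∈ Ici R₀, IsMaxOn f (Ici R₀) x := by
  refine hf.exists_isMaxOn' isClosed_Ici hr₁ ?_
  rw [cocompact_eq_atBot_atTop, inf_sup_right, (disjoint_atBot_principal_Ici R₀).eq_bot,
    bot_sup_eq]
  exact ((hlim.eventually (eventually_lt_nhds hpos)).mono fun _ h => h.le).filter_mono inf_le_left

theorem nonpos_of_deriv_deriv_pos {f : ℝ → ℝ} {R₀ : ℝ} (hf : ContinuousOn f (Ici R₀))
    (hR₀ : f R₀ ≤ 0) (hlim : Tendsto f atTop (𝓝 0))
    (hcrit : ∀ x, R₀ < x → 0 < f x → deriv f x = 0 → 0 < deriv (deriv f) x) :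
    ∀ r, R₀ ≤ r → f r ≤ 0 := by
  by_contra! ⟨r₁, hr₁, hpos⟩
  obtain ⟨x, hx, hmax⟩ := exists_isMaxOn_Ici_of_tendsto hf hr₁ hlim hpos
  have hfx : 0 < f x := hpos.trans_le (hmax hr₁)
  have hx' : R₀ < x := hx.lt_of_ne (by rintro rfl; linarith)
  have hloc : IsLocalMax f x := hmax.isLocalMax (Ici_mem_nhds hx')
  have hcont : ContinuousAt f x := hf.continuousAt (Ici_mem_nhds hx')
  exact (deriv_deriv_nonpos_of_isLocalMax hloc hcont).not_gt
    (hcrit x hx' hfx hloc.deriv_eq_zero)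

lemma deriv_sub_of_contDiffOn {u w : ℝ → ℝ} {s : Set ℝ} (hs : IsOpen s)
    (hu : ContDiffOn ℝ 2 u s) (hw : ContDiffOn ℝ 2 w s) {x : ℝ} (hx : x ∈ s) :
    deriv (u - w) x = deriv u x - deriv w x ∧
      deriv (deriv (u - w)) x = deriv (deriv u) x - deriv (deriv w) x := by
  have hdiff : ∀ {f : ℝ → ℝ}, ContDiffOn ℝ 2 f s → ∀ y ∈ s,
      DifferentiableAt ℝ f y ∧ DifferentiableAt ℝ (deriv f) y := fun hf y hy =>
    ⟨(hf.differentiableOn two_ne_zero).differentiableAt (hs.mem_nhds hy),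
      ((hf.deriv_of_isOpen hs (by norm_num : (1 : WithTop ℕ∞) + 1 ≤ 2)).differentiableOn
        one_ne_zero).differentiableAt (hs.mem_nhds hy)⟩
  have hderiv : deriv (u - w) =ᶠ[𝓝 x] deriv u - deriv w := by
    filter_upwards [hs.mem_nhds hx] with y hy
    exact deriv_sub (hdiff hu y hy).1 (hdiff hw y hy).1
  exact ⟨hderiv.eq_of_nhds, by
    rw [hderiv.deriv_eq, deriv_sub (hdiff hu x hx).2 (hdiff hw x hx).2]⟩

theorem le_of_deriv_deriv_lt {u w : ℝ → ℝ} {R₀ : ℝ} (hu : ContDiffOn ℝ 2 u (Ici R₀))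
    (hw : ContDiffOn ℝ 2 w (Ici R₀)) (hR₀ : u R₀ ≤ w R₀)
    (hlim : Tendsto (u - w) atTop (𝓝 0))
    (hcmp : ∀ x, R₀ < x → w x < u x → deriv u x = deriv w x →
      deriv (deriv w) x < deriv (deriv u) x) :
    ∀ r, R₀ ≤ r → u r ≤ w r := by
  have hmax := nonpos_of_deriv_deriv_pos (hu.continuousOn.sub hw.continuousOn) (by simpa)
    hlim fun x hx hpos hd => by
      obtain ⟨hd1, hd2⟩ := deriv_sub_of_contDiffOn isOpen_Ioi (hu.mono Ioi_subset_Ici_self)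
        (hw.mono Ioi_subset_Ici_self) hx
      rw [hd1, sub_eq_zero] at hd
      rw [hd2, sub_pos]
      exact hcmp x hx (sub_pos.mp hpos) hd
  exact fun r hr => sub_nonpos.mp (hmax r hr)

lemma hasDerivAt_const_div_pow (c : ℝ) (n : ℕ) {x : ℝ} (hx : x ≠ 0) :
    HasDerivAt (fun r => c / r ^ n) (-(n * c) / x ^ (n + 1)) x := by
  refine ((hasDerivAt_const x c).div (hasDerivAt_pow n x) (pow_ne_zero n hx)).congr_deriv ?_
  rcases n with _ | n
  · simp
  · field_simp
    push_cast
    ring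

lemma deriv_const_div_pow_eventuallyEq (c : ℝ) (n : ℕ) {x : ℝ} (hx : x ≠ 0) :
    deriv (fun r => c / r ^ n) =ᶠ[𝓝 x] fun r => -(n * c) / r ^ (n + 1) := by
  filter_upwards [isOpen_ne.mem_nhds hx] with y hy
  exact (hasDerivAt_const_div_pow c n hy).deriv

lemma deriv_deriv_const_div_pow (c : ℝ) (n : ℕ) {x : ℝ} (hx : x ≠ 0) :
    deriv (deriv fun r => c / r ^ n) x = n * (n + 1) * c / x ^ (n + 2) := by
  rw [(deriv_const_div_pow_eventuallyEq c n hx).deriv_eq,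
    (hasDerivAt_const_div_pow (-(n * c)) (n + 1) hx).deriv]
  push_cast
  ring

lemma radialLaplacian_const_div_pow_four (c : ℝ) {x : ℝ} (hx : x ≠ 0) :
    deriv (deriv fun r => c / r ^ 4) x + 2 / x * deriv (fun r => c / r ^ 4) x =
      12 * c / x ^ 6 := by
  rw [deriv_deriv_const_div_pow c 4 hx, (hasDerivAt_const_div_pow c 4 hx).deriv]
  field_simp
  ring

lemma div_pow_four_rpow_three_halves {c x : ℝ} (hc : 0 ≤ c) (hx : 0 ≤ x) :
    (c / x ^ 4) ^ (3 / 2 : ℝ) = c ^ (3 / 2 : ℝ) / x ^ 6 := by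
  rw [Real.div_rpow hc (by positivity), ← Real.rpow_natCast x 4, ← Real.rpow_mul hx,
    ← Real.rpow_natCast x 6]
  norm_num

lemma twelve_mul_le_mul_rpow_three_halves {D K : ℝ} (hD : 0 < D) (hK : 144 / D ^ 2 ≤ K) :
    12 * K ≤ D * K ^ (3 / 2 : ℝ) := by
  have hKpos : 0 < K := (by positivity : (0 : ℝ) < 144 / D ^ 2).trans_le hK
  have hsqrt : 12 / D ≤ √K := by
    rw [Real.le_sqrt (by positivity) hKpos.le, div_pow]
    norm_num [hK]
  rw [show (3 / 2 : ℝ) = 1 + 1 / 2 by norm_num, Real.rpow_add hKpos, Real.rpow_one,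
    ← Real.sqrt_eq_rpow]
  calc 12 * K = 12 / D * D * K := by field_simp
    _ ≤ √K * D * K := by gcongr
    _ = D * (K * √K) := by ring

theorem IsAtmosSol.le_div_pow_four {D R₀ a : ℝ} {u : ℝ → ℝ} (hu : IsAtmosSol D R₀ a u)
    (hD : 0 < D) (hR₀ : 0 < R₀) :
    ∀ r, R₀ ≤ r → u r ≤ max (144 / D ^ 2) (a * R₀ ^ 4) / r ^ 4 := by
  obtain ⟨hC2, hua, -, hODE, hlim⟩ := hu
  set K := max (144 / D ^ 2) (a * R₀ ^ 4)
  have hK : 144 / D ^ 2 ≤ K := le_max_left _ _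
  have hKpos : 0 < K := (by positivity : (0 : ℝ) < 144 / D ^ 2).trans_le hK
  refine le_of_deriv_deriv_lt hC2
    (contDiffOn_const.div (contDiffOn_id.pow 4) fun r hr => by
      have : 0 < r := hR₀.trans_le hr
      positivity) ?_ ?_ ?_
  · rw [hua, le_div_iff₀ (by positivity)]
    exact le_max_right _ _
  · have h := hlim.sub ((tendsto_const_nhds (x := K)).div_atTop (tendsto_pow_atTop four_ne_zero))
    rwa [sub_zero] at h
  · intro x hx hlt hd
    have hx0 : 0 < x := hR₀.trans hx
    calc deriv (deriv fun r => K / r ^ 4) x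
        = 12 * K / x ^ 6 - 2 / x * deriv u x := by
          rw [hd, ← radialLaplacian_const_div_pow_four K hx0.ne']; ring
      _ ≤ D * (K / x ^ 4) ^ (3 / 2 : ℝ) - 2 / x * deriv u x := by
          rw [div_pow_four_rpow_three_halves hKpos.le hx0.le, mul_div_assoc']
          exact sub_le_sub_right (div_le_div_of_nonneg_right
            (twelve_mul_le_mul_rpow_three_halves hD hK) (by positivity)) _
      _ < D * u x ^ (3 / 2 : ℝ) - 2 / x * deriv u x := by gcongr
      _ = deriv (deriv u) x := by linarith [hODE x hx]

lemma integrableOn_sq_mul_rpow_of_le_div_pow_four {u : ℝ → ℝ} {R₀ K : ℝ} (hR₀ : 0 < R₀)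
    (hu : ContinuousOn u (Ioi R₀)) (hpos : ∀ r, R₀ < r → 0 ≤ u r)
    (hle : ∀ r, R₀ < r → u r ≤ K / r ^ 4) :
    IntegrableOn (fun r => r ^ 2 * u r ^ (3 / 2 : ℝ)) (Ioi R₀) := by
  have hK : 0 ≤ K := by
    have h := (hpos _ (lt_add_one R₀)).trans (hle _ (lt_add_one R₀))
    rwa [le_div_iff₀ (by positivity), zero_mul] at h
  refine ((integrableOn_Ioi_rpow_of_lt (by norm_num : (-4 : ℝ) < -1) hR₀).const_mul
    (K ^ (3 / 2 : ℝ))).mono' (((continuousOn_pow 2).mul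
      (hu.rpow_const fun _ _ => Or.inr (by norm_num))).aestronglyMeasurable measurableSet_Ioi) ?_
  refine (ae_restrict_iff' measurableSet_Ioi).mpr (ae_of_all _ fun r hr => ?_)
  have hr0 : 0 < r := hR₀.trans hr
  have hur := hpos r hr
  rw [Real.norm_of_nonneg (by positivity)]
  calc r ^ 2 * u r ^ (3 / 2 : ℝ) ≤ r ^ 2 * (K / r ^ 4) ^ (3 / 2 : ℝ) := by
        gcongr; exact hle r hr
    _ = K ^ (3 / 2 : ℝ) * r ^ (-4 : ℝ) := by
        rw [div_pow_four_rpow_three_halves hK hr0.le, Real.rpow_neg hr0.le,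
          show (4 : ℝ) = (4 : ℕ) by norm_num, Real.rpow_natCast]
        field_simp

theorem stmt18_general (D R₀ a : ℝ) (hD : 0 < D) (hR₀ : 0 < R₀)
    (u : ℝ → ℝ) (hu : IsAtmosSol D R₀ a u) :
    (∃ C : ℝ, 0 < C ∧ ∀ r : ℝ, R₀ ≤ r → u r ≤ C / r ^ 4) ∧
    IntegrableOn (fun r : ℝ => r ^ 2 * u r ^ ((3:ℝ)/2)) (Ioi R₀) := by
  have hdecay := hu.le_div_pow_four hD hR₀
  obtain ⟨hC2, -, hpos, -, -⟩ := hu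
  refine ⟨⟨_, (by positivity : (0 : ℝ) < 144 / D ^ 2).trans_le (le_max_left _ _), hdecay⟩, ?_⟩
  exact integrableOn_sq_mul_rpow_of_le_div_pow_four hR₀
    (hC2.continuousOn.mono Ioi_subset_Ici_self) (fun r hr => (hpos r hr.le).le)
    fun r hr => hdecay r hr.le

/-- Lemma 5.11: the positive solution of the atmospheric problem tending to zero at
infinity decays at least like `r^{-4}`, and the corresponding radial density
`u^{3/2}` is integrable outside the ball of radius `R₀`. -/
theorem stmt18 (D R₀ a : ℝ) (hD : 0 < D) (hR₀ : 0 < R₀) (ha : 0 < a)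
    (u : ℝ → ℝ) (hu : IsAtmosSol D R₀ a u) :
    (∃ C : ℝ, 0 < C ∧ ∀ r : ℝ, R₀ ≤ r → u r ≤ C / r ^ 4) ∧
    IntegrableOn (fun r : ℝ => r ^ 2 * u r ^ ((3:ℝ)/2)) (Ioi R₀) :=
  stmt18_general D R₀ a hD hR₀ u hu
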